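/- Let M^ be the action-invisible augmented MDP built from a finite MDP M, a defender state-observation function DObs_S, the user objective φ0 = ¬U0 𝖴 F0 and the attacker objective φ1 = ¬U1 𝖴 F1. Let π^ be a Markov strategy of M^ that is almost-sure winning from (s0, DObs_S(s0)) for ¬U^1 𝖴 F^1, and let π^1 be the finite-memory strategy it induces on M. Then Pr_{s0}(¬U1 𝖴 F1; M_{π^1}) = 1; that is, π^1 is almost-sure winning in M for the attacker's reach-avoid objective. -/

import Mathlib

open scoped BigOperators Classical

/-- A finite Markov decision process: finite state set `S`, finite action set `A`,
nonempty enabled-action sets, an initial state, and a transition kernel that is a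
probability distribution on `S` for every state and enabled action. -/
structure MDP (S A : Type) [Fintype S] [Fintype A] where
  act : S → Finset A
  act_nonempty : ∀ s, (act s).Nonempty
  init : S
  P : S → A → S → ℝ
  P_nonneg : ∀ s a s', 0 ≤ P s a s'
  P_sum_one : ∀ s, ∀ a ∈ act s, (∑ s', P s a s') = 1

variable {S A : Type} [Fintype S] [Fintype A]

/-- `Post(s,a)`: states reachable with positive probability. -/
def post (M : MDP S A) (s : S) (a : A) : Set S := {s' | 0 < M.P s a s'}

/-- The last state of a history `(s, l)` (state `s` followed by action-state steps `l`). -/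
def lastState (s : S) (l : List (A × S)) : S :=
  (l.getLast?.map Prod.snd).getD s

/-- `(s, l)` is a (valid) history of `M`: each action is enabled and each transition
has positive probability. -/
def isHist (M : MDP S A) : S → List (A × S) → Prop
  | _, [] => True
  | s, (a, s') :: rest => a ∈ M.act s ∧ 0 < M.P s a s' ∧ isHist M s' rest

/-- The `i`-th state of the history `(s, l)`. -/
def stateAt (s : S) (l : List (A × S)) : ℕ → S
  | 0 => s
  | i + 1 => ((l[i]?).map Prod.snd).getD s

/-- `Occ(h)`: the set of states occurring in the history `(s, l)`. -/
def occ (s : S) (l : List (A × S)) : Set S :=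
  insert s {t | t ∈ l.map Prod.snd}

/-- The history `(s, l)` satisfies the reach-avoid objective `¬U 𝖴 F`. -/
def satRA (U F : Set S) (s : S) (l : List (A × S)) : Prop :=
  ∃ k ≤ l.length, stateAt s l k ∈ F ∧ ∀ i < k, stateAt s l i ∉ U ∪ F

/-- Probability of the continuation `l` of the history `(s0, pre)` under strategy `π`. -/
noncomputable def prFrom (M : MDP S A) (π : S → List (A × S) → A → ℝ) :
    S → List (A × S) → List (A × S) → ℝ
  | _, _, [] => 1
  | s0, pre, (a, s') :: rest =>
      π s0 pre a * M.P (lastState s0 pre) a s' * prFrom M π s0 (pre ++ [(a, s')]) rest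

/-- `Pr(h; M_π)`: the probability of the history `h = (s, l)` under strategy `π`. -/
noncomputable def prHist (M : MDP S A) (π : S → List (A × S) → A → ℝ)
    (s : S) (l : List (A × S)) : ℝ :=
  prFrom M π s [] l

/-- A (randomized, history-dependent) strategy: maps each history to a probability
distribution over the actions enabled at its last state. -/
structure Strategy (M : MDP S A) where
  toFun : S → List (A × S) → A → ℝ
  nonneg : ∀ s l a, 0 ≤ toFun s l a
  sum_one : ∀ s l, (∑ a, toFun s l a) = 1
  support_mem : ∀ s l a, 0 < toFun s l a → a ∈ M.act (lastState s l)

/-- A (randomized) Markov strategy: maps each state to a probability distribution over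
the actions enabled at that state. -/
structure MarkovStrategy (M : MDP S A) where
  toFun : S → A → ℝ
  nonneg : ∀ s a, 0 ≤ toFun s a
  sum_one : ∀ s, (∑ a, toFun s a) = 1
  support_mem : ∀ s a, 0 < toFun s a → a ∈ M.act s

/-- The history-dependent strategy induced by a Markov strategy. -/
def MarkovStrategy.strat {M : MDP S A} (σ : MarkovStrategy M) : Strategy M where
  toFun s l a := σ.toFun (lastState s l) a
  nonneg s l a := σ.nonneg _ a
  sum_one s l := σ.sum_one _
  support_mem s l a h := σ.support_mem _ a h

/-- Sum of `Pr(h; M_π)` over all histories `h` of length `n` starting at `s` that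
satisfy the reach-avoid objective `¬U 𝖴 F`. -/
noncomputable def satProbN (M : MDP S A) (π : S → List (A × S) → A → ℝ)
    (U F : Set S) (s : S) (n : ℕ) : ℝ :=
  ∑ f : Fin n → A × S,
    if isHist M s (List.ofFn f) ∧ satRA U F s (List.ofFn f)
    then prHist M π s (List.ofFn f) else 0

/-- `Pr_s(¬U 𝖴 F; M_π)`: supremum over `n` of `satProbN`. -/
noncomputable def prSat (M : MDP S A) (π : S → List (A × S) → A → ℝ)
    (U F : Set S) (s : S) : ℝ :=
  ⨆ n : ℕ, satProbN M π U F s n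

/-- The almost-sure winning region `ASW(¬U 𝖴 F)`. -/
def ASW (M : MDP S A) (U F : Set S) : Set S :=
  {s | ∃ π : Strategy M, prSat M π.toFun U F s = 1}

/-- `Allowed(s)`: enabled actions keeping the agent inside `ASW(¬U 𝖴 F)`
(empty for `s ∉ ASW(¬U 𝖴 F)`). -/
def allowed (M : MDP S A) (U F : Set S) (s : S) : Set A :=
  {a | s ∈ ASW M U F ∧ a ∈ M.act s ∧ post M s a ⊆ ASW M U F}

/-- A defender state-observation function: observation-equivalence classes partition the
state space and observation-equivalent states have the same enabled actions. -/
structure ObsFun (M : MDP S A) where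
  obs : S → Set S
  mem_self : ∀ s, s ∈ obs s
  eq_of_mem : ∀ s s', s' ∈ obs s → obs s' = obs s
  act_eq : ∀ s s', s' ∈ obs s → M.act s' = M.act s

/-- Action-visible belief update `Update_v(B, a, s'')`. -/
def updateV (M : MDP S A) (O : ObsFun M) (U0 F0 : Set S)
    (B : Set S) (a : A) (s'' : S) : Set S :=
  {s' | ∃ so ∈ B, a ∈ allowed M U0 F0 so ∧ s' ∈ post M so a ∧ O.obs s' = O.obs s''}

/-- Action-invisible belief update `Update_inv(B, s'')`. -/
def updateInv (M : MDP S A) (O : ObsFun M) (U0 F0 : Set S)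
    (B : Set S) (s'' : S) : Set S :=
  {s' | ∃ so ∈ B, ∃ ao ∈ allowed M U0 F0 so, s' ∈ post M so ao ∧ O.obs s' = O.obs s''}

/-- The unsafe set `U~1 = {(s,B) : s ∈ U1, B ≠ ∅} ∪ {(s,∅) : s ∈ S}` of the
augmented MDP. -/
def augU (U1 : Set S) : Set (S × Set S) :=
  {p | (p.1 ∈ U1 ∧ p.2 ≠ ∅) ∨ p.2 = ∅}

/-- The target set `F~1 = F1 × (2^S \ {∅})` of the augmented MDP. -/
def augF (F1 : Set S) : Set (S × Set S) :=
  {p | p.1 ∈ F1 ∧ p.2 ≠ ∅}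

/-- The action-visible augmented MDP `M~`. -/
noncomputable def augV (M : MDP S A) (O : ObsFun M) (U0 F0 : Set S) :
    MDP (S × Set S) A where
  act p := M.act p.1
  act_nonempty p := M.act_nonempty p.1
  init := (M.init, O.obs M.init)
  P p a q :=
    if p.2.Nonempty ∧ ∃ so ∈ p.2, a ∈ allowed M U0 F0 so then
      (if q.2 = updateV M O U0 F0 p.2 a q.1 then M.P p.1 a q.1 else 0)
    else (if q = (p.1, (∅ : Set S)) then 1 else 0)
  P_nonneg := by
    intro p a q
    try dsimp only
    split_ifs <;> first | exact M.P_nonneg _ _ _ | norm_num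
  P_sum_one := by
    intro p a ha
    by_cases hc : p.2.Nonempty ∧ ∃ so ∈ p.2, a ∈ allowed M U0 F0 so
    · simp only [if_pos hc]
      rw [Fintype.sum_prod_type]
      have : ∀ t : S,
          (∑ C : Set S, if C = updateV M O U0 F0 p.2 a t then M.P p.1 a t else 0)
            = M.P p.1 a t := by
        intro t
        simp [Finset.sum_ite_eq']
      simp only [this]
      exact M.P_sum_one p.1 a ha
    · simp only [if_neg hc]
      simp [Finset.sum_ite_eq']

/-- The action-invisible augmented MDP `M^`. -/
noncomputable def augInv (M : MDP S A) (O : ObsFun M) (U0 F0 : Set S) :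
    MDP (S × Set S) A where
  act p := M.act p.1
  act_nonempty p := M.act_nonempty p.1
  init := (M.init, O.obs M.init)
  P p a q :=
    if (∃ so ∈ p.2, a ∈ allowed M U0 F0 so) ∧ a ∈ M.act p.1 then
      (if q.2 = updateInv M O U0 F0 p.2 q.1 then M.P p.1 a q.1 else 0)
    else (if q = (p.1, (∅ : Set S)) then 1 else 0)
  P_nonneg := by
    intro p a q
    try dsimp only
    split_ifs <;> first | exact M.P_nonneg _ _ _ | norm_num
  P_sum_one := by
    intro p a ha
    by_cases hc : (∃ so ∈ p.2, a ∈ allowed M U0 F0 so) ∧ a ∈ M.act p.1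
    · simp only [if_pos hc]
      rw [Fintype.sum_prod_type]
      have : ∀ t : S,
          (∑ C : Set S, if C = updateInv M O U0 F0 p.2 t then M.P p.1 a t else 0)
            = M.P p.1 a t := by
        intro t
        simp [Finset.sum_ite_eq']
      simp only [this]
      exact M.P_sum_one p.1 a ha
    · simp only [if_neg hc]
      simp [Finset.sum_ite_eq']

/-- The defender's belief after observing (states and actions of) the history `(s0, l)`,
for an action-visible defender: `B0 = DObs_S(s0)`, `B(i+1) = Update_v(Bi, ai, s(i+1))`. -/
def beliefV (M : MDP S A) (O : ObsFun M) (U0 F0 : Set S)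
    (s0 : S) (l : List (A × S)) : Set S :=
  l.foldl (fun B p => updateV M O U0 F0 B p.1 p.2) (O.obs s0)

/-- The defender's belief after observing (the states of) the history `(s0, l)`,
for an action-invisible defender: `B0 = DObs_S(s0)`, `B(i+1) = Update_inv(Bi, s(i+1))`. -/
def beliefInv (M : MDP S A) (O : ObsFun M) (U0 F0 : Set S)
    (s0 : S) (l : List (A × S)) : Set S :=
  l.foldl (fun B p => updateInv M O U0 F0 B p.2) (O.obs s0)

/-- The finite-memory strategy on `M` induced by a Markov strategy of the action-visible
augmented MDP `M~`. -/
noncomputable def inducedV (M : MDP S A) (O : ObsFun M) (U0 F0 : Set S)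
    (σ : MarkovStrategy (augV M O U0 F0)) : Strategy M where
  toFun s l a := σ.toFun (lastState s l, beliefV M O U0 F0 s l) a
  nonneg s l a := σ.nonneg _ a
  sum_one s l := σ.sum_one _
  support_mem s l a h := σ.support_mem _ a h

/-- The finite-memory strategy on `M` induced by a Markov strategy of the
action-invisible augmented MDP `M^`. -/
noncomputable def inducedInv (M : MDP S A) (O : ObsFun M) (U0 F0 : Set S)
    (σ : MarkovStrategy (augInv M O U0 F0)) : Strategy M where
  toFun s l a := σ.toFun (lastState s l, beliefInv M O U0 F0 s l) a
  nonneg s l a := σ.nonneg _ a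
  sum_one s l := σ.sum_one _
  support_mem s l a h := σ.support_mem _ a h

/-- A ranking witness `(W, r)` for the reach-avoid objective `¬U 𝖴 F`. -/
def rankWitness (M : MDP S A) (U F : Set S) (W : Set S) (r : S → ℕ) : Prop :=
  W ∩ U = ∅ ∧
  ∀ s ∈ W \ F, ∃ a ∈ M.act s, post M s a ⊆ W ∧
    (post M s a ∩ {t ∈ W | r t < r s}).Nonempty

/-!
Pairing each state of `M` with the defender's belief turns the induced strategy into a Markov
chain on `S × 2^S`. This chain moves exactly like `M^` under `π^`, except at the moves that `M^`
sends to an absorbing sink `(s, ∅)`; the sinks lose for `¬U^1 𝖴 F^1`, and `F^1` and the non-sink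
part of `U^1` project onto `F1` and `U1`. By induction on the horizon, the `n`-step winning
probability in `M^` is therefore at most the `n`-step winning probability of the induced strategy
in `M`, which is itself at most one.
-/

omit [Fintype S] [Fintype A] in
lemma stateAt_cons_succ {s x : S} {a : A} {l : List (A × S)} {i : ℕ} (hi : i ≤ l.length) :
    stateAt s ((a, x) :: l) (i + 1) = stateAt x l i := by
  cases i with
  | zero => rfl
  | succ j => simp [stateAt, List.getElem?_eq_getElem (Nat.lt_of_succ_le hi)]

omit [Fintype S] [Fintype A] in
lemma satRA_of_mem {U F : Set S} {s : S} (hF : s ∈ F) (l : List (A × S)) : satRA U F s l :=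
  ⟨0, Nat.zero_le _, hF, nofun⟩

omit [Fintype S] [Fintype A] in
lemma not_satRA_of_mem {U F : Set S} {s : S} (hU : s ∈ U) (hF : s ∉ F) (l : List (A × S)) :
    ¬ satRA U F s l := by
  rintro ⟨_ | k, -, hk, hbefore⟩
  exacts [hF hk, hbefore 0 k.succ_pos (Or.inl hU)]

omit [Fintype S] [Fintype A] in
lemma satRA_nil_iff {U F : Set S} {s : S} : satRA U F s ([] : List (A × S)) ↔ s ∈ F :=
  ⟨fun ⟨k, hk, hF, _⟩ => by rwa [Nat.le_zero.1 hk] at hF, fun hF => satRA_of_mem hF []⟩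

omit [Fintype S] [Fintype A] in
lemma satRA_cons_iff {U F : Set S} {s x : S} {a : A} {l : List (A × S)}
    (hU : s ∉ U) (hF : s ∉ F) : satRA U F s ((a, x) :: l) ↔ satRA U F x l := by
  constructor
  · rintro ⟨_ | k, hk, hkF, hbefore⟩
    · exact absurd hkF hF
    · have hk : k ≤ l.length := Nat.succ_le_succ_iff.1 hk
      refine ⟨k, hk, by rwa [stateAt_cons_succ hk] at hkF, fun i hi => ?_⟩
      simpa [stateAt_cons_succ (hi.le.trans hk)] using hbefore (i + 1) (Nat.succ_lt_succ hi)
  · rintro ⟨k, hk, hkF, hbefore⟩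
    refine ⟨k + 1, Nat.succ_le_succ hk, by rwa [stateAt_cons_succ hk], ?_⟩
    rintro (_ | i) hi
    · exact fun h => h.elim hU hF
    · rw [stateAt_cons_succ (by omega)]
      exact hbefore i (Nat.succ_lt_succ_iff.1 hi)

omit [Fintype S] [Fintype A] in
lemma lastState_concat {s : S} {l : List (A × S)} {p : A × S} : lastState s (l ++ [p]) = p.2 := by
  simp [lastState]

lemma sum_ofFn_succ {X : Type} [Fintype X] (G : List X → ℝ) (n : ℕ) :
    ∑ f : Fin (n + 1) → X, G (List.ofFn f) = ∑ x, ∑ g : Fin n → X, G (x :: List.ofFn g) := by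
  rw [← (Fin.consEquiv fun _ => X).sum_comp, Fintype.sum_prod_type]
  simp [Fin.consEquiv, List.ofFn_succ]

/-- A strategy whose memory `β` also records the current state of `N`. -/
structure MemoryStrategy (N : MDP S A) (β : Type) where
  toFun : β → A → ℝ
  state : β → S
  next : β → A × S → β
  nonneg : ∀ b a, 0 ≤ toFun b a
  sum_one : ∀ b, ∑ a, toFun b a = 1
  support_mem : ∀ b a, 0 < toFun b a → a ∈ N.act (state b)
  state_next : ∀ b a x, state (next b (a, x)) = x

namespace MemoryStrategy

variable {N : MDP S A} {β : Type} (ρ : MemoryStrategy N β)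

noncomputable def prob : β → List (A × S) → ℝ
  | _, [] => 1
  | b, (a, x) :: rest => ρ.toFun b a * N.P (ρ.state b) a x * prob (ρ.next b (a, x)) rest

noncomputable def satProbN (U F : Set S) (b : β) (n : ℕ) : ℝ :=
  ∑ f : Fin n → A × S,
    if isHist N (ρ.state b) (List.ofFn f) ∧ satRA U F (ρ.state b) (List.ofFn f)
    then ρ.prob b (List.ofFn f) else 0

variable {ρ}

lemma toFun_eq_zero {b : β} {a : A} (ha : a ∉ N.act (ρ.state b)) : ρ.toFun b a = 0 :=
  (ρ.nonneg b a).eq_or_lt.elim Eq.symm fun h => absurd (ρ.support_mem b a h) ha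

variable (ρ)

lemma prob_nonneg : ∀ (b : β) (l : List (A × S)), 0 ≤ ρ.prob b l
  | _, [] => zero_le_one
  | b, (a, x) :: rest =>
      mul_nonneg (mul_nonneg (ρ.nonneg b a) (N.P_nonneg _ a x)) (prob_nonneg _ rest)

lemma prob_eq_zero_of_not_isHist :
    ∀ (b : β) (l : List (A × S)), ¬ isHist N (ρ.state b) l → ρ.prob b l = 0
  | _, [], h => absurd trivial h
  | b, (a, x) :: rest, h => by
    by_cases ha : a ∈ N.act (ρ.state b)
    · rcases (N.P_nonneg (ρ.state b) a x).eq_or_lt with hP | hP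
      · simp [prob, ← hP]
      · have hrest : ¬ isHist N (ρ.state (ρ.next b (a, x))) rest := by
          rw [ρ.state_next]
          exact fun hrest => h ⟨ha, hP, hrest⟩
        simp [prob, prob_eq_zero_of_not_isHist _ rest hrest]
    · simp [prob, toFun_eq_zero ha]

lemma sum_prob_ofFn : ∀ (n : ℕ) (b : β), ∑ f : Fin n → A × S, ρ.prob b (List.ofFn f) = 1
  | 0, b => by simp [prob]
  | n + 1, b => by
    have hstep : ∀ a x, ∑ g : Fin n → A × S, ρ.prob b ((a, x) :: List.ofFn g)
        = ρ.toFun b a * N.P (ρ.state b) a x := fun a x => by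
      simp only [prob, ← Finset.mul_sum, sum_prob_ofFn n, mul_one]
    have hact : ∀ a, ∑ x, ρ.toFun b a * N.P (ρ.state b) a x = ρ.toFun b a := fun a => by
      rcases (ρ.nonneg b a).eq_or_lt with h | h
      · simp [← h]
      · rw [← Finset.mul_sum, N.P_sum_one _ a (ρ.support_mem b a h), mul_one]
    rw [sum_ofFn_succ, Fintype.sum_prod_type]
    simp only [hstep, hact, ρ.sum_one]

variable {U F : Set S} {b : β} {n : ℕ}

lemma satProbN_nonneg : 0 ≤ ρ.satProbN U F b n :=
  Finset.sum_nonneg fun _ _ => by split_ifs <;> simp [prob_nonneg]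

lemma satProbN_le_one : ρ.satProbN U F b n ≤ 1 :=
  (Finset.sum_le_sum fun _ _ => by split_ifs <;> simp [prob_nonneg]).trans
    (ρ.sum_prob_ofFn n b).le

lemma satProbN_eq_one_of_mem (hF : ρ.state b ∈ F) : ρ.satProbN U F b n = 1 := by
  rw [← ρ.sum_prob_ofFn n b]
  refine Finset.sum_congr rfl fun f _ => ?_
  by_cases hh : isHist N (ρ.state b) (List.ofFn f)
  · rw [if_pos ⟨hh, satRA_of_mem hF _⟩]
  · rw [if_neg (hh ·.1), ρ.prob_eq_zero_of_not_isHist _ _ hh]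

lemma satProbN_eq_zero_of_mem (hU : ρ.state b ∈ U) (hF : ρ.state b ∉ F) :
    ρ.satProbN U F b n = 0 :=
  Finset.sum_eq_zero fun _ _ => if_neg fun h => not_satRA_of_mem hU hF _ h.2

lemma satProbN_zero : ρ.satProbN U F b 0 = if ρ.state b ∈ F then 1 else 0 := by
  simp [satProbN, isHist, satRA_nil_iff, prob]

lemma satProbN_succ (hU : ρ.state b ∉ U) (hF : ρ.state b ∉ F) :
    ρ.satProbN U F b (n + 1)
      = ∑ a, ρ.toFun b a * ∑ x, N.P (ρ.state b) a x * ρ.satProbN U F (ρ.next b (a, x)) n := by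
  rw [satProbN, sum_ofFn_succ (fun l => if isHist N (ρ.state b) l ∧ satRA U F (ρ.state b) l
    then ρ.prob b l else 0), Fintype.sum_prod_type]
  refine Finset.sum_congr rfl fun a _ => ?_
  rw [Finset.mul_sum]
  refine Finset.sum_congr rfl fun x _ => ?_
  rw [satProbN, Finset.mul_sum, Finset.mul_sum]
  refine Finset.sum_congr rfl fun g _ => ?_
  rw [ρ.state_next]
  by_cases ha : a ∈ N.act (ρ.state b)
  · rcases (N.P_nonneg (ρ.state b) a x).eq_or_lt with hP | hP
    · simp [← hP, isHist]
    · simp only [isHist, satRA_cons_iff hU hF, ha, hP, true_and, prob]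
      split_ifs <;> ring
  · simp [isHist, ha, toFun_eq_zero ha]

lemma prFrom_eq_prob {π : S → List (A × S) → A → ℝ} {s0 : S} (mem : List (A × S) → β)
    (hπ : ∀ pre, π s0 pre = ρ.toFun (mem pre))
    (hstate : ∀ pre, lastState s0 pre = ρ.state (mem pre))
    (hnext : ∀ pre p, mem (pre ++ [p]) = ρ.next (mem pre) p) :
    ∀ l pre, prFrom N π s0 pre l = ρ.prob (mem pre) l
  | [], _ => rfl
  | (a, x) :: rest, pre => by
    rw [prFrom, prob, prFrom_eq_prob mem hπ hstate hnext rest, hπ, hstate, hnext]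

lemma satProbN_eq {π : S → List (A × S) → A → ℝ} {s0 : S} (mem : List (A × S) → β)
    (hπ : ∀ pre, π s0 pre = ρ.toFun (mem pre))
    (hstate : ∀ pre, lastState s0 pre = ρ.state (mem pre))
    (hnext : ∀ pre p, mem (pre ++ [p]) = ρ.next (mem pre) p) (U F : Set S) (n : ℕ) :
    _root_.satProbN N π U F s0 n = ρ.satProbN U F (mem []) n := by
  have hinit : ρ.state (mem []) = s0 := (hstate []).symm
  simp only [_root_.satProbN, MemoryStrategy.satProbN, prHist, hinit,
    ρ.prFrom_eq_prob mem hπ hstate hnext]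

end MemoryStrategy

def MarkovStrategy.toMemoryStrategy {N : MDP S A} (σ : MarkovStrategy N) :
    MemoryStrategy N S where
  toFun := σ.toFun
  state := id
  next _ p := p.2
  nonneg := σ.nonneg
  sum_one := σ.sum_one
  support_mem := σ.support_mem
  state_next _ _ _ := rfl

lemma MarkovStrategy.satProbN_strat {N : MDP S A} (σ : MarkovStrategy N) (U F : Set S) (s : S)
    (n : ℕ) : satProbN N σ.strat.toFun U F s n = σ.toMemoryStrategy.satProbN U F s n :=
  σ.toMemoryStrategy.satProbN_eq (lastState s) (fun _ => rfl) (fun _ => rfl)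
    (fun _ _ => lastState_concat) U F n

section ActionInvisible

variable (M : MDP S A) (O : ObsFun M) (U0 F0 : Set S)

noncomputable def inducedInvMemory (σ : MarkovStrategy (augInv M O U0 F0)) :
    MemoryStrategy M (S × Set S) where
  toFun := σ.toFun
  state := Prod.fst
  next b p := (p.2, updateInv M O U0 F0 b.2 p.2)
  nonneg := σ.nonneg
  sum_one := σ.sum_one
  support_mem := σ.support_mem
  state_next _ _ _ := rfl

lemma beliefInv_concat {s : S} {l : List (A × S)} {p : A × S} :
    beliefInv M O U0 F0 s (l ++ [p]) = updateInv M O U0 F0 (beliefInv M O U0 F0 s l) p.2 := by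
  simp [beliefInv, List.foldl_append]

lemma satProbN_inducedInv (σ : MarkovStrategy (augInv M O U0 F0)) (U F : Set S) (n : ℕ) :
    satProbN M (inducedInv M O U0 F0 σ).toFun U F M.init n
      = (inducedInvMemory M O U0 F0 σ).satProbN U F (M.init, O.obs M.init) n :=
  (inducedInvMemory M O U0 F0 σ).satProbN_eq
    (fun pre => (lastState M.init pre, beliefInv M O U0 F0 M.init pre)) (fun _ => rfl)
    (fun _ => rfl) (fun _ _ => by rw [lastState_concat, beliefInv_concat]; rfl) U F n

lemma sum_augInv_P_mul (V : S × Set S → ℝ) (s : S) (B : Set S) (a : A) :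
    ∑ q, (augInv M O U0 F0).P (s, B) a q * V q
      = if (∃ so ∈ B, a ∈ allowed M U0 F0 so) ∧ a ∈ M.act s
        then ∑ t, M.P s a t * V (t, updateInv M O U0 F0 B t) else V (s, ∅) := by
  simp only [augInv]
  split_ifs <;> simp [Fintype.sum_prod_type, ite_mul, Finset.sum_ite_eq']

lemma satProbN_augInv_le_inducedInv (σ : MarkovStrategy (augInv M O U0 F0)) (U1 F1 : Set S)
    (n : ℕ) (s : S) (B : Set S) :
    σ.toMemoryStrategy.satProbN (augU U1) (augF F1) (s, B) n
      ≤ (inducedInvMemory M O U0 F0 σ).satProbN U1 F1 (s, B) n := by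
  induction n generalizing s B with
  | zero =>
    rw [MemoryStrategy.satProbN_zero, MemoryStrategy.satProbN_zero]
    split_ifs <;> simp_all [augF, MarkovStrategy.toMemoryStrategy, inducedInvMemory]
  | succ n ih =>
    set ρ := inducedInvMemory M O U0 F0 σ
    by_cases hF : s ∈ F1
    · exact (MemoryStrategy.satProbN_le_one _).trans (ρ.satProbN_eq_one_of_mem hF).ge
    by_cases hsink : (s, B) ∈ augU U1
    · rw [σ.toMemoryStrategy.satProbN_eq_zero_of_mem hsink (hF ·.1)]
      exact ρ.satProbN_nonneg
    have hU : s ∉ U1 := fun hU => hsink (Or.inl ⟨hU, fun hB => hsink (Or.inr hB)⟩)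
    rw [σ.toMemoryStrategy.satProbN_succ hsink (hF ·.1), ρ.satProbN_succ hU hF]
    refine Finset.sum_le_sum fun a _ => mul_le_mul_of_nonneg_left ?_ (σ.nonneg _ a)
    rw [sum_augInv_P_mul]
    split_ifs
    · exact Finset.sum_le_sum fun t _ => mul_le_mul_of_nonneg_left (ih _ _) (M.P_nonneg s a t)
    · rw [σ.toMemoryStrategy.satProbN_eq_zero_of_mem (Or.inr rfl) (·.2 rfl)]
      exact Finset.sum_nonneg fun t _ => mul_nonneg (M.P_nonneg s a t) ρ.satProbN_nonneg

end ActionInvisible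

theorem inducedInv_ASW_general (M : MDP S A) (O : ObsFun M) (U0 F0 U1 F1 : Set S)
    (σ : MarkovStrategy (augInv M O U0 F0))
    (hσ : prSat (augInv M O U0 F0) σ.strat.toFun (augU U1) (augF F1)
      (M.init, O.obs M.init) = 1) :
    prSat M (inducedInv M O U0 F0 σ).toFun U1 F1 M.init = 1 := by
  have hle_one : ∀ n, satProbN M (inducedInv M O U0 F0 σ).toFun U1 F1 M.init n ≤ 1 := fun n => by
    rw [satProbN_inducedInv]
    exact MemoryStrategy.satProbN_le_one _
  have hmono : ∀ n, satProbN (augInv M O U0 F0) σ.strat.toFun (augU U1) (augF F1)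
      (M.init, O.obs M.init) n ≤ satProbN M (inducedInv M O U0 F0 σ).toFun U1 F1 M.init n :=
    fun n => by
      rw [σ.satProbN_strat, satProbN_inducedInv]
      exact satProbN_augInv_le_inducedInv M O U0 F0 σ U1 F1 n _ _
  refine le_antisymm (ciSup_le hle_one) ?_
  rw [← hσ]
  exact ciSup_mono ⟨1, Set.forall_mem_range.2 hle_one⟩ hmono

/-- a Markov strategy of the action-invisible augmented MDP `M^` that is
almost-sure winning from `(s0, DObs_S(s0))` for `¬U^1 𝖴 F^1` induces a finite-memory
strategy on `M` that is almost-sure winning from `s0` for `¬U1 𝖴 F1`. -/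
theorem inducedInv_ASW (M : MDP S A) (O : ObsFun M) (U0 F0 U1 F1 : Set S)
    (h0 : Disjoint U0 F0) (h1 : Disjoint U1 F1)
    (σ : MarkovStrategy (augInv M O U0 F0))
    (hσ : prSat (augInv M O U0 F0) σ.strat.toFun (augU U1) (augF F1)
      (M.init, O.obs M.init) = 1) :
    prSat M (inducedInv M O U0 F0 σ).toFun U1 F1 M.init = 1 :=
  inducedInv_ASW_general M O U0 F0 U1 F1 σ hσ
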